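/- Suppose θ(x) = [[ζ(x), ζ(x)·0 + η(x)A_2],[A_2ᵀη(x)ᵀ, B(x)]] (i.e. c = 1, A_1 = 0) is positive semi-definite for all x in X = {x : x_1 ≥ Σ_{i=2}^q x_i²}. Then B(x) − A_2ᵀ η(x)ᵀ η(x) A_2 is positive semi-definite for all x ∈ X. -/

import Mathlib

open Matrix

/-!
Test the positive semi-definite block matrix `θ(x) = [[ζ, C], [Cᵀ, B]]`, `C = η A₂`, against
vectors `(-C w, w)`. Since `ζ η = η` (the first row of `ζ η` is `2 yᵀ T_{ij}(y) = 0`), the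
cross terms collapse and the quadratic form becomes `wᵀ (B - Cᵀ C) w`.
-/

/-- `T_{ij}(y) ∈ ℝⁿ` with `i`-th entry `yⱼ`, `j`-th entry `-yᵢ`, zero elsewhere. -/
noncomputable def Tvec (n : ℕ) (i j : Fin n) (y : Fin n → ℝ) : Fin n → ℝ :=
  fun k => if k = i then y j else if k = j then -(y i) else 0

/-- `η(y)` : first row zero, columns `T_{ij}(y)` for `i < j`. -/
noncomputable def etaMat (n : ℕ) (y : Fin n → ℝ) :
    Matrix (Unit ⊕ Fin n) {ij : Fin n × Fin n // ij.1 < ij.2} ℝ :=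
  Matrix.of fun r c => Sum.elim (fun _ => 0) (fun k => Tvec n c.1.1 c.1.2 y k) r

/-- The parabolic boundary matrix `ζ(x) = [[4x₁, 2yᵀ],[2y, Id]]`. -/
noncomputable def zetaMat (n : ℕ) (x1 : ℝ) (y : Fin n → ℝ) :
    Matrix (Unit ⊕ Fin n) (Unit ⊕ Fin n) ℝ :=
  Matrix.of fun r c =>
    match r, c with
    | Sum.inl _, Sum.inl _ => 4 * x1
    | Sum.inl _, Sum.inr j => 2 * y j
    | Sum.inr j, Sum.inl _ => 2 * y j
    | Sum.inr j, Sum.inr k => if j = k then 1 else 0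

namespace Matrix

/-- `D - Bᴴ B = Vᴴ θ V` for `V = [-B; 1]`, because `A B = B` kills the first block row of `θ V`. -/
theorem PosSemidef.sub_conjTranspose_mul_self_of_mul_eq {R m n : Type*} [CommRing R]
    [PartialOrder R] [StarRing R] [Fintype m] [Fintype n] [DecidableEq n]
    {A : Matrix m m R} {B : Matrix m n R} {D : Matrix n n R}
    (h : (fromBlocks A B Bᴴ D).PosSemidef) (hAB : A * B = B) : (D - Bᴴ * B).PosSemidef := by
  set V : Matrix (m ⊕ n) n R := fromRows (-B) 1
  have hV : Vᴴ * fromBlocks A B Bᴴ D * V = D - Bᴴ * B := by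
    rw [Matrix.mul_assoc, fromBlocks_mul_fromRows, conjTranspose_fromRows_eq_fromCols_conjTranspose,
      fromCols_mul_fromRows]
    simp [hAB, Matrix.mul_neg, sub_eq_neg_add]
  exact hV ▸ h.conjTranspose_mul_mul_same V

end Matrix

theorem dotProduct_Tvec_self {n : ℕ} {i j : Fin n} (hij : i ≠ j) (y : Fin n → ℝ) :
    y ⬝ᵥ Tvec n i j y = 0 := by
  have hT : Tvec n i j y = Pi.single i (y j) + Pi.single j (-y i) := by
    ext k
    by_cases hki : k = i <;> by_cases hkj : k = j <;> simp_all [Tvec]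
  rw [hT, dotProduct_add, dotProduct_single, dotProduct_single]
  ring

theorem zetaMat_mul_etaMat (n : ℕ) (x1 : ℝ) (y : Fin n → ℝ) :
    zetaMat n x1 y * etaMat n y = etaMat n y := by
  ext (_ | k) ⟨⟨i, j⟩, hij⟩
  · have hyT := dotProduct_Tvec_self hij.ne y
    simp only [dotProduct] at hyT
    simp [mul_apply, zetaMat, etaMat, Fintype.sum_sum_type, mul_assoc, ← Finset.mul_sum, hyT]
  · simp [mul_apply, zetaMat, etaMat, Fintype.sum_sum_type]

/-- If `θ(x) = [[ζ(x), η(x)A₂],[A₂ᵀη(x)ᵀ, B(x)]]` is positive semi-definite for all `x`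
in `X = {x : x₁ ≥ ∑ yᵢ²}`, then `B(x) - A₂ᵀη(x)ᵀη(x)A₂` is positive semi-definite for
all `x ∈ X`. Coordinates: `x = (x₁, y, z)` indexed by `(Unit ⊕ Fin n) ⊕ Fin m`. -/
theorem stmt12 (n m : ℕ)
    (A2 : Matrix {ij : Fin n × Fin n // ij.1 < ij.2} (Fin m) ℝ)
    (B : (((Unit ⊕ Fin n) ⊕ Fin m) → ℝ) → Matrix (Fin m) (Fin m) ℝ)
    (hpsd : ∀ x : ((Unit ⊕ Fin n) ⊕ Fin m) → ℝ,
      ∑ j, (x (Sum.inl (Sum.inr j))) ^ 2 ≤ x (Sum.inl (Sum.inl ())) →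
      (Matrix.fromBlocks
        (zetaMat n (x (Sum.inl (Sum.inl ()))) (fun j => x (Sum.inl (Sum.inr j))))
        (etaMat n (fun j => x (Sum.inl (Sum.inr j))) * A2)
        (etaMat n (fun j => x (Sum.inl (Sum.inr j))) * A2)ᵀ
        (B x)).PosSemidef) :
    ∀ x : ((Unit ⊕ Fin n) ⊕ Fin m) → ℝ,
      ∑ j, (x (Sum.inl (Sum.inr j))) ^ 2 ≤ x (Sum.inl (Sum.inl ())) →
      (B x - A2ᵀ * (etaMat n (fun j => x (Sum.inl (Sum.inr j))))ᵀ *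
        etaMat n (fun j => x (Sum.inl (Sum.inr j))) * A2).PosSemidef := by
  intro x hx
  have hθ := hpsd x hx
  rw [← conjTranspose_eq_transpose_of_trivial] at hθ
  have hC := hθ.sub_conjTranspose_mul_self_of_mul_eq <| by
    rw [← Matrix.mul_assoc, zetaMat_mul_etaMat]
  simpa [conjTranspose_eq_transpose_of_trivial, transpose_mul, Matrix.mul_assoc] using hC
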